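/- There exists N ∈ ℕ such that for all n ≥ N the following holds. Let P(n) be the number of split graphs with vertex set {1,…,n} whose questioning set is empty, and let S(n) = ∑_{c=2}^{⌊n/2⌋} C(n,c) · (2^c − 1)^{n−c} + ∑_{c=⌊n/2⌋+1}^{n−2} C(n,c) · (2^{n−c} − 1)^c, where C(·,·) denotes the binomial coefficient. Then P(n) ≤ S(n) ≤ (1 + (2/3)^{n/3}) · P(n). -/

import Mathlib

/-- A set of vertices is independent if no two of its members are adjacent. -/
def IsIndep {V : Type*} (G : SimpleGraph V) (s : Set V) : Prop :=
  s.Pairwise fun u v => ¬ G.Adj u v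

/-- `(C, I)` is a split partition of `G`: `C` and `I` are disjoint, cover all vertices,
`C` is a clique and `I` is an independent set (empty parts are allowed). -/
def IsSplitPartition {V : Type*} (G : SimpleGraph V) (C I : Set V) : Prop :=
  Disjoint C I ∧ C ∪ I = Set.univ ∧ G.IsClique C ∧ IsIndep G I

/-- A split graph: the vertex set can be partitioned into a clique and an independent set. -/
def IsSplit {V : Type*} (G : SimpleGraph V) : Prop :=
  ∃ C I : Set V, IsSplitPartition G C I

/-- The always-clique set: vertices belonging to the clique part of every split partition. -/
def alwaysClique {V : Type*} (G : SimpleGraph V) : Set V :=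
  {v | ∀ C I : Set V, IsSplitPartition G C I → v ∈ C}

/-- The always-independent set: vertices belonging to the independent part of every
split partition. -/
def alwaysIndep {V : Type*} (G : SimpleGraph V) : Set V :=
  {v | ∀ C I : Set V, IsSplitPartition G C I → v ∈ I}

/-- The questioning set: vertices placed in the clique part by some split partition and
in the independent part by some (other) split partition. -/
def questioning {V : Type*} (G : SimpleGraph V) : Set V :=
  {v | (∃ C I : Set V, IsSplitPartition G C I ∧ v ∈ C) ∧
       (∃ C I : Set V, IsSplitPartition G C I ∧ v ∈ I)}

/-!
A split graph has empty questioning set exactly when it has a *rigid* split partition `(C, Cᶜ)`: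
no vertex of `C` can move to the independent side (each has a neighbour outside `C`) and no vertex
outside `C` can join the clique (each has a non-neighbour in `C`); a rigid `C` is then the clique
of every split partition. For fixed `C` with `|C| = c`, a split graph with clique `C` is the same
as a choice of neighbourhood in `C` for each of the `n - c` outside vertices. The second
rigidity condition forbids the full neighbourhood, leaving `(2 ^ c - 1) ^ (n - c)` graphs, and
the first one fails for at most `c * 2 ^ ((c - 1) * (n - c))` of these. Complementing the graph
swaps `C` with `Cᶜ` and the two conditions, which gives the bound `(2 ^ (n - c) - 1) ^ c` as well.
Summing over `C` yields `P n ≤ S n ≤ P n + E n`. The error `E n` is at most `2 n²` times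
`C(n, ⌊n/2⌋) * 2 ^ ((⌊n/2⌋ - 1) * ⌈n/2⌉)`, whereas by Bernoulli's inequality the central
term alone contributes about `2 ^ ⌈n/2⌉ / 2` times that quantity to `P n`. Hence
`E n / P n = O(n² 2 ^ (-n/2))`, which is eventually below `(2/3) ^ (n/3)`.
-/

open Finset SimpleGraph

section Structure

variable {V : Type*} {G : SimpleGraph V} {A B C : Set V}

lemma IsSplitPartition.eq_compl (h : IsSplitPartition G A B) : B = Aᶜ :=
  (isCompl_iff.2 ⟨h.1, codisjoint_iff.2 h.2.1⟩).compl_eq.symm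

lemma isSplitPartition_compl_iff :
    IsSplitPartition G A Aᶜ ↔ G.IsClique A ∧ G.IsIndepSet Aᶜ := by
  simp [IsSplitPartition, IsIndep, disjoint_compl_right]

lemma IsSplitPartition.compl (h : IsSplitPartition G A Aᶜ) : IsSplitPartition Gᶜ Aᶜ Aᶜᶜ := by
  rw [isSplitPartition_compl_iff] at h ⊢
  simpa [and_comm] using h

def IsRigidSplitClique (G : SimpleGraph V) (C : Set V) : Prop :=
  IsSplitPartition G C Cᶜ ∧ (∀ x ∈ C, ∃ y ∉ C, G.Adj x y) ∧ ∀ y ∉ C, ∃ x ∈ C, ¬G.Adj x y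

lemma IsRigidSplitClique.compl (hC : IsRigidSplitClique G C) : IsRigidSplitClique Gᶜ Cᶜ := by
  obtain ⟨hsplit, hout, hin⟩ := hC
  refine ⟨hsplit.compl, fun y hy => ?_, fun x hx => ?_⟩
  · obtain ⟨x, hx, hxy⟩ := hin y hy
    exact ⟨x, by simpa using hx, (compl_adj _ _ _).2 ⟨fun h => hy (h ▸ hx), fun h => hxy h.symm⟩⟩
  · obtain ⟨y, hy, hxy⟩ := hout x (by simpa using hx)
    exact ⟨y, hy, fun h => ((compl_adj _ _ _).1 h).2 hxy.symm⟩

lemma isRigidSplitClique_compl_iff : IsRigidSplitClique Gᶜ Cᶜ ↔ IsRigidSplitClique G C :=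
  ⟨fun h => by simpa using h.compl, IsRigidSplitClique.compl⟩

lemma IsRigidSplitClique.eq_of_isSplitPartition (hC : IsRigidSplitClique G C)
    (h : IsSplitPartition G A B) : A = C := by
  obtain ⟨hsplit, hout, hin⟩ := hC
  rw [h.eq_compl, isSplitPartition_compl_iff] at h
  obtain ⟨hA, hAc⟩ := h
  have hCA : C ⊆ A := by
    intro x hx
    by_contra hxA
    obtain ⟨y, hy, hxy⟩ := hout x hx
    have hyA : y ∈ A := by
      by_contra hyA
      exact hAc hxA hyA hxy.ne hxy
    obtain ⟨x', hx', hx'y⟩ := hin y hy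
    -- `x'` leaves the clique `A` too, but `x` and `x'` are adjacent inside `C`.
    have hx'A : x' ∉ A := fun hx'A => hx'y (hA hx'A hyA (ne_of_mem_of_not_mem hx' hy))
    have hxx' : x ≠ x' := by rintro rfl; exact hx'y hxy
    exact hAc hxA hx'A hxx' (hsplit.2.2.1 hx hx' hxx')
  refine Set.Subset.antisymm (fun y hyA => ?_) hCA
  by_contra hy
  obtain ⟨x, hx, hxy⟩ := hin y hy
  exact hxy (hA (hCA hx) hyA (ne_of_mem_of_not_mem hx hy))

lemma IsRigidSplitClique.questioning_eq_empty (hC : IsRigidSplitClique G C) :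
    questioning G = ∅ := by
  refine Set.eq_empty_of_forall_notMem fun v ⟨⟨A, B, hAB, hvA⟩, ⟨A', B', hAB', hvB'⟩⟩ => ?_
  rw [hC.eq_of_isSplitPartition hAB] at hvA
  rw [hAB'.eq_compl, hC.eq_of_isSplitPartition hAB'] at hvB'
  exact hvB' hvA

lemma IsSplitPartition.diff_singleton (h : IsSplitPartition G A Aᶜ) {x : V}
    (hx : ∀ y ∉ A, ¬G.Adj x y) : IsSplitPartition G (A \ {x}) (A \ {x})ᶜ := by
  rw [isSplitPartition_compl_iff] at h ⊢
  refine ⟨h.1.subset Set.sdiff_subset, ?_⟩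
  rw [Set.compl_sdiff, Set.union_comm, Set.union_singleton]
  exact h.2.insert fun y hy _ => ⟨hx y hy, fun h => hx y hy h.symm⟩

lemma IsSplitPartition.insert (h : IsSplitPartition G A Aᶜ) {y : V}
    (hy : ∀ x ∈ A, G.Adj x y) : IsSplitPartition G (insert y A) (insert y A)ᶜ := by
  rw [isSplitPartition_compl_iff] at h ⊢
  exact ⟨h.1.insert fun x hx _ => (hy x hx).symm,
    h.2.mono (Set.compl_subset_compl.2 (Set.subset_insert _ _))⟩

lemma exists_isRigidSplitClique (hG : IsSplit G) (hQ : questioning G = ∅) :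
    ∃ C, IsRigidSplitClique G C := by
  obtain ⟨A, B, h⟩ := hG
  rw [h.eq_compl] at h
  refine ⟨A, h, fun x hx => ?_, fun y hy => ?_⟩
  · by_contra! hx'
    have hxQ : x ∈ questioning G := ⟨⟨A, Aᶜ, h, hx⟩, ⟨_, _, h.diff_singleton hx', by simp⟩⟩
    simp [hQ] at hxQ
  · by_contra! hy'
    have hyQ : y ∈ questioning G := ⟨⟨_, _, h.insert hy', by simp⟩, ⟨A, Aᶜ, h, hy⟩⟩
    simp [hQ] at hyQ

lemma IsRigidSplitClique.nontrivial [Nonempty V] (hC : IsRigidSplitClique G C) :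
    C.Nontrivial := by
  obtain ⟨-, hout, hin⟩ := hC
  obtain ⟨x, hx⟩ : C.Nonempty := by
    obtain ⟨v⟩ := ‹Nonempty V›
    by_cases hv : v ∈ C
    · exact ⟨v, hv⟩
    · obtain ⟨x, hx, -⟩ := hin v hv
      exact ⟨x, hx⟩
  obtain ⟨y, hy, hxy⟩ := hout x hx
  obtain ⟨x', hx', hx'y⟩ := hin y hy
  exact ⟨x, hx, x', hx', by rintro rfl; exact hx'y hxy⟩

end Structure

section Counting

variable {V : Type*} {G G' : SimpleGraph V} {C : Finset V}

open Classical in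
noncomputable def neighborsIn (G : SimpleGraph V) (C : Finset V) (y : V) : Finset V :=
  {x ∈ C | G.Adj x y}

lemma mem_neighborsIn {x y : V} : x ∈ neighborsIn G C y ↔ x ∈ C ∧ G.Adj x y := by
  simp [neighborsIn]

lemma neighborsIn_subset (y : V) : neighborsIn G C y ⊆ C := fun _ hx => (mem_neighborsIn.1 hx).1

lemma eq_of_neighborsIn_eq (hG : IsSplitPartition G C (↑C)ᶜ) (hG' : IsSplitPartition G' C (↑C)ᶜ)
    (h : ∀ y ∉ C, neighborsIn G C y = neighborsIn G' C y) : G = G' := by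
  rw [isSplitPartition_compl_iff] at hG hG'
  have key : ∀ x ∈ C, ∀ y ∉ C, (G.Adj x y ↔ G'.Adj x y) := fun x hx y hy => by
    simpa [mem_neighborsIn, hx] using congrArg (x ∈ ·) (h y hy)
  ext x y
  by_cases hx : x ∈ C <;> by_cases hy : y ∈ C
  · exact ⟨fun h => hG'.1 hx hy h.ne, fun h => hG.1 hx hy h.ne⟩
  · exact key x hx y hy
  · exact ⟨fun h => (key y hy x hx).1 h.symm |>.symm, fun h => ((key y hy x hx).2 h.symm).symm⟩
  · exact ⟨fun h => absurd h (hG.2 (by simpa) (by simpa) h.ne),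
      fun h => absurd h (hG'.2 (by simpa) (by simpa) h.ne)⟩

variable [Fintype V] [DecidableEq V]

/-- The split graph with clique `C` in which each `y ∉ C` is adjacent to exactly `f y`. -/
def splitGraphOfNeighbors (C : Finset V) (f : ↥Cᶜ → Finset V) : SimpleGraph V :=
  SimpleGraph.fromRel fun x y => x ∈ C ∧ (y ∈ C ∨ ∃ hy : y ∈ Cᶜ, x ∈ f ⟨y, hy⟩)

lemma isSplitPartition_splitGraphOfNeighbors (f : ↥Cᶜ → Finset V) :
    IsSplitPartition (splitGraphOfNeighbors C f) C (↑C)ᶜ := by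
  rw [isSplitPartition_compl_iff]
  refine ⟨fun x hx y hy hxy => ?_, fun x hx y hy hxy => ?_⟩
  · simp_all [splitGraphOfNeighbors]
  · simp_all [splitGraphOfNeighbors]

lemma neighborsIn_splitGraphOfNeighbors {f : ↥Cᶜ → Finset V} (hf : ∀ y, f y ⊆ C) (y : ↥Cᶜ) :
    neighborsIn (splitGraphOfNeighbors C f) C y = f y := by
  obtain ⟨y, hy⟩ := y
  have hyC : y ∉ C := mem_compl.1 hy
  ext x
  simp only [mem_neighborsIn, splitGraphOfNeighbors, fromRel_adj]
  constructor
  · rintro ⟨-, -, ⟨-, hyC' | ⟨_, hxf⟩⟩ | ⟨hy', -⟩⟩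
    · exact absurd hyC' hyC
    · exact hxf
    · exact absurd hy' hyC
  · intro hxf
    have hx := hf _ hxf
    exact ⟨hx, ne_of_mem_of_not_mem hx hyC, Or.inl ⟨hx, Or.inr ⟨hy, hxf⟩⟩⟩

lemma ncard_isSplitPartition_neighborsIn_mem (𝒜 : Finset (Finset V)) (h𝒜 : ∀ s ∈ 𝒜, s ⊆ C) :
    {G : SimpleGraph V | IsSplitPartition G C (↑C)ᶜ ∧ ∀ y ∉ C, neighborsIn G C y ∈ 𝒜}.ncard
      = #𝒜 ^ #Cᶜ := by
  set S := {G : SimpleGraph V | IsSplitPartition G C (↑C)ᶜ ∧ ∀ y ∉ C, neighborsIn G C y ∈ 𝒜}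
  let encode : SimpleGraph V → ↥Cᶜ → Finset V := fun G y => neighborsIn G C y
  have hinj : S.InjOn encode := fun G hG G' hG' h =>
    eq_of_neighborsIn_eq hG.1 hG'.1 fun y hy => congrFun h ⟨y, mem_compl.2 hy⟩
  have himage : encode '' S = (Fintype.piFinset fun _ => 𝒜 : Finset (↥Cᶜ → Finset V)) := by
    ext f
    simp only [Set.mem_image, mem_coe, Fintype.mem_piFinset]
    constructor
    · rintro ⟨G, ⟨-, hG⟩, rfl⟩ y
      exact hG y (mem_compl.1 y.2)
    · intro hf
      have hfC : ∀ y, f y ⊆ C := fun y => h𝒜 _ (hf y)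
      refine ⟨splitGraphOfNeighbors C f, ⟨isSplitPartition_splitGraphOfNeighbors f, ?_⟩,
        funext (neighborsIn_splitGraphOfNeighbors hfC)⟩
      intro y hy
      rw [neighborsIn_splitGraphOfNeighbors hfC ⟨y, mem_compl.2 hy⟩]
      exact hf _
  rw [← hinj.ncard_image, himage, Set.ncard_coe_finset, Fintype.card_piFinset,
    prod_const, card_univ, Fintype.card_coe]

lemma ncard_isSplitPartition_forall_exists_not_adj (C : Finset V) :
    {G : SimpleGraph V | IsSplitPartition G C (↑C)ᶜ ∧ ∀ y ∉ C, ∃ x ∈ C, ¬G.Adj x y}.ncard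
      = (2 ^ #C - 1) ^ #Cᶜ := by
  rw [← card_powerset, ← card_erase_of_mem (mem_powerset_self C),
    ← ncard_isSplitPartition_neighborsIn_mem _ fun s hs => mem_powerset.1 (mem_of_mem_erase hs)]
  congr! 5 with G - y
  refine imp_congr_right fun _ => ?_
  simp [Finset.ext_iff, mem_neighborsIn, neighborsIn_subset]

lemma ncard_isSplitPartition_forall_not_adj {x : V} (hx : x ∈ C) :
    {G : SimpleGraph V | IsSplitPartition G C (↑C)ᶜ ∧ ∀ y ∉ C, ¬G.Adj x y}.ncard
      = 2 ^ ((#C - 1) * #Cᶜ) := by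
  rw [pow_mul, ← card_erase_of_mem hx, ← card_powerset,
    ← ncard_isSplitPartition_neighborsIn_mem _ fun s hs =>
      (mem_powerset.1 hs).trans (erase_subset _ _)]
  congr! 5 with G - y
  refine imp_congr_right fun _ => ?_
  simp only [mem_powerset, Finset.subset_iff, mem_neighborsIn, mem_erase, and_imp]
  exact ⟨fun h z hz hzy => ⟨by rintro rfl; exact h hzy, hz⟩, fun h hxy => (h hx hxy).1 rfl⟩

end Counting

section RigidCount

variable {V : Type*} [Fintype V]

noncomputable def rigidCount (C : Finset V) : ℕ :=
  {G : SimpleGraph V | IsRigidSplitClique G C}.ncard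

lemma ncard_isSplit_questioning_eq_empty_eq_sum :
    {G : SimpleGraph V | IsSplit G ∧ questioning G = ∅}.ncard = ∑ C : Finset V, rigidCount C := by
  have h : {G : SimpleGraph V | IsSplit G ∧ questioning G = ∅}
      = ⋃ C : Finset V, {G | IsRigidSplitClique G C} := by
    ext G
    simp only [Set.mem_iUnion]
    constructor
    · rintro ⟨hG, hQ⟩
      obtain ⟨C, hC⟩ := exists_isRigidSplitClique hG hQ
      exact ⟨C.toFinite.toFinset, by simpa using hC⟩
    · rintro ⟨C, hC⟩
      exact ⟨⟨_, _, hC.1⟩, hC.questioning_eq_empty⟩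
  rw [h, Set.ncard_iUnion_of_finite (fun _ => Set.toFinite _), finsum_eq_sum_of_fintype]
  · rfl
  · exact fun C C' hCC' => Set.disjoint_left.2 fun G hC hC' =>
      hCC' (coe_inj.1 (hC'.eq_of_isSplitPartition hC.1))

variable [DecidableEq V]

lemma rigidCount_compl (C : Finset V) : rigidCount Cᶜ = rigidCount C := by
  have h : {G : SimpleGraph V | IsRigidSplitClique G ↑Cᶜ}
      = compl ⁻¹' {G : SimpleGraph V | IsRigidSplitClique G C} := by
    ext G
    simpa using isRigidSplitClique_compl_iff (G := Gᶜ) (C := (C : Set V))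
  rw [rigidCount, rigidCount, h, Set.ncard_preimage_of_injective_subset_range compl_injective
    (by simp [Set.range_eq_univ.2 compl_surjective])]

lemma rigidCount_le (C : Finset V) : rigidCount C ≤ (2 ^ #C - 1) ^ #Cᶜ := by
  rw [← ncard_isSplitPartition_forall_exists_not_adj]
  exact Set.ncard_le_ncard fun G hG => ⟨hG.1, fun y hy => hG.2.2 y (by simpa using hy)⟩

lemma sub_one_pow_le_rigidCount_add (C : Finset V) :
    (2 ^ #C - 1) ^ #Cᶜ ≤ rigidCount C + #C * 2 ^ ((#C - 1) * #Cᶜ) := by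
  set bad : V → Set (SimpleGraph V) :=
    fun x => {G | IsSplitPartition G C (↑C)ᶜ ∧ ∀ y ∉ C, ¬G.Adj x y}
  have hcover : {G : SimpleGraph V | IsSplitPartition G C (↑C)ᶜ ∧ ∀ y ∉ C, ∃ x ∈ C, ¬G.Adj x y}
      ⊆ {G | IsRigidSplitClique G C} ∪ ⋃ x ∈ C, bad x := by
    rintro G ⟨hG, hin⟩
    by_cases hout : ∀ x ∈ C, ∃ y ∉ C, G.Adj x y
    · exact Or.inl ⟨hG, fun x hx => by simpa using hout x hx, fun y hy => hin y (by simpa using hy)⟩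
    · obtain ⟨x, hx, hxy⟩ : ∃ x ∈ C, ∀ y ∉ C, ¬G.Adj x y := by simpa using hout
      exact Or.inr (Set.mem_biUnion hx ⟨hG, hxy⟩)
  calc (2 ^ #C - 1) ^ #Cᶜ
      = {G : SimpleGraph V | IsSplitPartition G C (↑C)ᶜ ∧ ∀ y ∉ C, ∃ x ∈ C, ¬G.Adj x y}.ncard :=
        (ncard_isSplitPartition_forall_exists_not_adj C).symm
    _ ≤ rigidCount C + ∑ x ∈ C, (bad x).ncard :=
        (Set.ncard_le_ncard hcover).trans <|
          (Set.ncard_union_le _ _).trans (Nat.add_le_add_left (C.set_ncard_biUnion_le bad) _)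
    _ = rigidCount C + #C * 2 ^ ((#C - 1) * #Cᶜ) := by
        rw [sum_congr rfl fun x hx => ncard_isSplitPartition_forall_not_adj hx, sum_const,
          smul_eq_mul]

lemma rigidCount_le_of_compl (C : Finset V) : rigidCount C ≤ (2 ^ #Cᶜ - 1) ^ #C := by
  simpa [rigidCount_compl] using rigidCount_le Cᶜ

lemma sub_one_pow_le_rigidCount_add_of_compl (C : Finset V) :
    (2 ^ #Cᶜ - 1) ^ #C ≤ rigidCount C + #Cᶜ * 2 ^ ((#Cᶜ - 1) * #C) := by
  simpa [rigidCount_compl] using sub_one_pow_le_rigidCount_add Cᶜ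

lemma two_le_card_of_isRigidSplitClique [Nonempty V] {G : SimpleGraph V} {C : Finset V}
    (hC : IsRigidSplitClique G C) : 2 ≤ #C ∧ #C + 2 ≤ Fintype.card V := by
  have h₁ : 1 < #C := one_lt_card_iff_nontrivial.2 hC.nontrivial
  have h₂ : 1 < #Cᶜ := by
    rw [one_lt_card_iff_nontrivial, Finset.Nontrivial, coe_compl]
    exact hC.compl.nontrivial
  rw [card_compl] at h₂
  omega

lemma ncard_isSplit_questioning_eq_empty_eq_sum_card [Nonempty V] :
    {G : SimpleGraph V | IsSplit G ∧ questioning G = ∅}.ncard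
      = ∑ c ∈ Icc 2 (Fintype.card V - 2), ∑ C ∈ powersetCard c (univ : Finset V), rigidCount C := by
  rw [ncard_isSplit_questioning_eq_empty_eq_sum, ← powerset_univ, sum_powerset, card_univ]
  have hsub : Icc 2 (Fintype.card V - 2) ⊆ range (Fintype.card V + 1) := fun c hc => by
    simp only [mem_Icc, mem_range] at hc ⊢
    omega
  refine (sum_subset hsub fun c _ hc => ?_).symm
  refine sum_eq_zero fun C hC => (Set.ncard_eq_zero (Set.toFinite _)).2 <|
    Set.eq_empty_of_forall_notMem fun G hG => ?_
  have := two_le_card_of_isRigidSplitClique hG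
  rw [mem_powersetCard_univ.1 hC] at this
  exact hc (mem_Icc.2 (by omega))

end RigidCount

section SumBounds

variable {V : Type*} [Fintype V] {f : Finset V → ℕ} {c b e : ℕ}

lemma sum_powersetCard_le_choose_mul (hf : ∀ C : Finset V, #C = c → f C ≤ b) :
    ∑ C ∈ powersetCard c (univ : Finset V), f C ≤ (Fintype.card V).choose c * b := by
  rw [← card_univ, ← card_powersetCard, ← smul_eq_mul]
  exact sum_le_card_nsmul _ _ _ fun C hC => hf C (mem_powersetCard_univ.1 hC)

lemma choose_mul_le_sum_powersetCard_add (hf : ∀ C : Finset V, #C = c → b ≤ f C + e) :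
    (Fintype.card V).choose c * b
      ≤ ∑ C ∈ powersetCard c (univ : Finset V), f C + (Fintype.card V).choose c * e := by
  have hcard : #(powersetCard c (univ : Finset V)) = (Fintype.card V).choose c := by
    rw [card_powersetCard, card_univ]
  calc (Fintype.card V).choose c * b = ∑ _C ∈ powersetCard c (univ : Finset V), b := by
        rw [sum_const, hcard, smul_eq_mul]
    _ ≤ ∑ C ∈ powersetCard c (univ : Finset V), (f C + e) :=
        sum_le_sum fun C hC => hf C (mem_powersetCard_univ.1 hC)
    _ = _ := by rw [sum_add_distrib, sum_const, hcard, smul_eq_mul]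

end SumBounds

section Estimates

lemma sub_one_mul_sub_le_of_le_half {n a q : ℕ} (hq : 2 * q ≤ n) (ha : a ≤ q) :
    (a - 1) * (n - a) ≤ (q - 1) * (n - q) := by
  rcases Nat.eq_zero_or_pos a with rfl | ha₀
  · simp
  -- the difference is `(q - a) * (n + 1 - q - a)`
  zify [ha₀, ha.trans (by omega : q ≤ n), (by omega : 1 ≤ q), (by omega : q ≤ n)]
  nlinarith [mul_nonneg (sub_nonneg.2 (Int.ofNat_le.2 ha))
    (by omega : (0 : ℤ) ≤ n + 1 - q - a)]

lemma two_pow_mul_le_two_mul_sub_one_pow {a b : ℕ} (h : 2 * b ≤ 2 ^ a) :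
    2 ^ (a * b) ≤ 2 * (2 ^ a - 1) ^ b := by
  have ha : (0 : ℝ) < 2 ^ a := by positivity
  have hb : (b : ℝ) / 2 ^ a ≤ 1 / 2 := by
    rw [div_le_div_iff₀ ha two_pos]
    exact_mod_cast (by omega : b * 2 ≤ 1 * 2 ^ a)
  have hbern := one_add_mul_le_pow (a := -(1 / 2 ^ a : ℝ)) (by
    have : (1 : ℝ) / 2 ^ a ≤ 1 := by rw [div_le_one ha]; exact one_le_pow₀ (by norm_num)
    linarith) b
  rw [← sub_eq_add_neg, mul_neg, ← sub_eq_add_neg, mul_one_div] at hbern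
  have : ((2 : ℝ) ^ a) ^ b ≤ 2 * ((2 : ℝ) ^ a - 1) ^ b :=
    calc ((2 : ℝ) ^ a) ^ b ≤ 2 * ((2 ^ a) ^ b * (1 - b / 2 ^ a)) := by
          nlinarith [pow_pos ha b]
      _ ≤ 2 * ((2 ^ a) ^ b * (1 - 1 / 2 ^ a) ^ b) := by gcongr
      _ = 2 * (2 ^ a - 1) ^ b := by rw [← mul_pow, mul_one_sub, mul_one_div_cancel ha.ne']
  rw [pow_mul, ← Nat.cast_le (α := ℝ)]
  push_cast [Nat.cast_sub Nat.one_le_two_pow]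
  exact this

end Estimates

section Counts

noncomputable def splitCount (n : ℕ) : ℕ :=
  {G : SimpleGraph (Fin n) | IsSplit G ∧ questioning G = ∅}.ncard

def splitBound (n : ℕ) : ℕ :=
  ∑ c ∈ Icc 2 (n / 2), n.choose c * (2 ^ c - 1) ^ (n - c)
    + ∑ c ∈ Icc (n / 2 + 1) (n - 2), n.choose c * (2 ^ (n - c) - 1) ^ c

def splitBoundError (n : ℕ) : ℕ :=
  ∑ c ∈ Icc 2 (n / 2), n.choose c * (c * 2 ^ ((c - 1) * (n - c)))
    + ∑ c ∈ Icc (n / 2 + 1) (n - 2), n.choose c * ((n - c) * 2 ^ ((n - c - 1) * c))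

variable {n : ℕ}

lemma splitCount_eq_add (hn : 0 < n) :
    splitCount n
      = ∑ c ∈ Icc 2 (n / 2), ∑ C ∈ powersetCard c (univ : Finset (Fin n)), rigidCount C
        + ∑ c ∈ Icc (n / 2 + 1) (n - 2),
            ∑ C ∈ powersetCard c (univ : Finset (Fin n)), rigidCount C := by
  have : Nonempty (Fin n) := ⟨⟨0, hn⟩⟩
  have hsplit : Icc 2 (n - 2) = Icc 2 (n / 2) ∪ Icc (n / 2 + 1) (n - 2) := by
    ext c; simp only [mem_Icc, mem_union]; omega
  rw [splitCount, ncard_isSplit_questioning_eq_empty_eq_sum_card, Fintype.card_fin, hsplit,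
    sum_union (disjoint_left.2 fun c h₁ h₂ => by simp only [mem_Icc] at h₁ h₂; omega)]

lemma card_compl_fin {C : Finset (Fin n)} {c : ℕ} (hC : #C = c) : #Cᶜ = n - c := by
  rw [card_compl, Fintype.card_fin, hC]

lemma sum_rigidCount_le (c : ℕ) :
    ∑ C ∈ powersetCard c (univ : Finset (Fin n)), rigidCount C
      ≤ n.choose c * (2 ^ c - 1) ^ (n - c) :=
  (sum_powersetCard_le_choose_mul fun C hC => by
    simpa [hC, card_compl_fin hC] using rigidCount_le C).trans_eq (by rw [Fintype.card_fin])

lemma sum_rigidCount_le_of_compl (c : ℕ) :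
    ∑ C ∈ powersetCard c (univ : Finset (Fin n)), rigidCount C
      ≤ n.choose c * (2 ^ (n - c) - 1) ^ c :=
  (sum_powersetCard_le_choose_mul fun C hC => by
    simpa [hC, card_compl_fin hC] using rigidCount_le_of_compl C).trans_eq
      (by rw [Fintype.card_fin])

lemma choose_mul_le_sum_rigidCount_add (c : ℕ) :
    n.choose c * (2 ^ c - 1) ^ (n - c) ≤ ∑ C ∈ powersetCard c (univ : Finset (Fin n)), rigidCount C
      + n.choose c * (c * 2 ^ ((c - 1) * (n - c))) := by
  simpa using choose_mul_le_sum_powersetCard_add (V := Fin n) (f := rigidCount) (c := c)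
    (b := (2 ^ c - 1) ^ (n - c)) (e := c * 2 ^ ((c - 1) * (n - c))) fun C hC => by
      simpa [hC, card_compl_fin hC] using sub_one_pow_le_rigidCount_add C

lemma choose_mul_le_sum_rigidCount_add_of_compl (c : ℕ) :
    n.choose c * (2 ^ (n - c) - 1) ^ c ≤ ∑ C ∈ powersetCard c (univ : Finset (Fin n)), rigidCount C
      + n.choose c * ((n - c) * 2 ^ ((n - c - 1) * c)) := by
  simpa using choose_mul_le_sum_powersetCard_add (V := Fin n) (f := rigidCount) (c := c)
    (b := (2 ^ (n - c) - 1) ^ c) (e := (n - c) * 2 ^ ((n - c - 1) * c)) fun C hC => by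
      simpa [hC, card_compl_fin hC] using sub_one_pow_le_rigidCount_add_of_compl C

lemma splitCount_le_splitBound (hn : 0 < n) : splitCount n ≤ splitBound n := by
  rw [splitCount_eq_add hn, splitBound]
  gcongr with c _ c _
  · exact sum_rigidCount_le c
  · exact sum_rigidCount_le_of_compl c

lemma splitBound_le_splitCount_add_splitBoundError (hn : 0 < n) :
    splitBound n ≤ splitCount n + splitBoundError n := by
  rw [splitCount_eq_add hn, splitBound, splitBoundError, add_add_add_comm, ← sum_add_distrib,
    ← sum_add_distrib]
  gcongr with c _ c _
  · exact choose_mul_le_sum_rigidCount_add c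
  · exact choose_mul_le_sum_rigidCount_add_of_compl c

lemma splitBoundError_le (n : ℕ) :
    splitBoundError n ≤ 2 * n ^ 2 * (n.choose (n / 2) * 2 ^ ((n / 2 - 1) * (n - n / 2))) := by
  set T := n.choose (n / 2) * (n * 2 ^ ((n / 2 - 1) * (n - n / 2)))
  have hterm {a c : ℕ} (ha : a ≤ n / 2) (hac : a ≤ n) :
      n.choose c * (a * 2 ^ ((a - 1) * (n - a))) ≤ T :=
    Nat.mul_le_mul (Nat.choose_le_middle c n) <| Nat.mul_le_mul hac <|
      Nat.pow_le_pow_right two_pos (sub_one_mul_sub_le_of_le_half (by omega) ha)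
  have h₁ : ∑ c ∈ Icc 2 (n / 2), n.choose c * (c * 2 ^ ((c - 1) * (n - c))) ≤ n * T := by
    refine (sum_le_card_nsmul _ _ T fun c hc => ?_).trans ?_
    · rw [mem_Icc] at hc
      exact hterm hc.2 (by omega)
    · rw [smul_eq_mul, Nat.card_Icc]
      exact Nat.mul_le_mul_right _ (by omega)
  have h₂ : ∑ c ∈ Icc (n / 2 + 1) (n - 2), n.choose c * ((n - c) * 2 ^ ((n - c - 1) * c))
      ≤ n * T := by
    refine (sum_le_card_nsmul _ _ T fun c hc => ?_).trans ?_
    · rw [mem_Icc] at hc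
      have := hterm (a := n - c) (c := c) (by omega) (by omega)
      rwa [Nat.sub_sub_self (by omega)] at this
    · rw [smul_eq_mul, Nat.card_Icc]
      exact Nat.mul_le_mul_right _ (by omega)
  calc splitBoundError n ≤ n * T + n * T := add_le_add h₁ h₂
    _ = _ := by ring

end Counts

section Asymptotics

open Filter

lemma choose_half_mul_two_pow_le_splitCount {n : ℕ} (hn : 6 ≤ n) :
    n.choose (n / 2) * 2 ^ ((n / 2 - 1) * (n - n / 2)) * 2 ^ (n - n / 2)
      ≤ 2 * (splitCount n + n / 2 * (n.choose (n / 2) * 2 ^ ((n / 2 - 1) * (n - n / 2)))) := by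
  have hsum : ∑ C ∈ powersetCard (n / 2) (univ : Finset (Fin n)), rigidCount C ≤ splitCount n := by
    rw [splitCount_eq_add (by omega)]
    exact le_add_right (single_le_sum (f := fun c => ∑ C ∈ powersetCard c univ, rigidCount C)
      (fun _ _ => Nat.zero_le _) (mem_Icc.2 ⟨by omega, le_rfl⟩))
  have hcentral := choose_mul_le_sum_rigidCount_add (n := n) (n / 2)
  set h := n / 2
  set m := n - n / 2
  have h2m : 2 * m ≤ 2 ^ h := by
    have h4 : 2 ^ h = 4 * 2 ^ (h - 2) := by
      rw [show 4 = 2 ^ 2 by rfl, ← pow_add]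
      congr 1
      omega
    have := (h - 2).lt_two_pow_self
    omega
  have hexp : (h - 1) * m + m = h * m := by
    rw [Nat.sub_one_mul, Nat.sub_add_cancel (Nat.le_mul_of_pos_left m (by omega))]
  calc n.choose h * 2 ^ ((h - 1) * m) * 2 ^ m = n.choose h * 2 ^ (h * m) := by
        rw [mul_assoc, ← pow_add, hexp]
    _ ≤ n.choose h * (2 * (2 ^ h - 1) ^ m) :=
        Nat.mul_le_mul_left _ (two_pow_mul_le_two_mul_sub_one_pow h2m)
    _ ≤ 2 * (splitCount n + n.choose h * (h * 2 ^ ((h - 1) * m))) := by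
        rw [mul_left_comm]
        exact Nat.mul_le_mul_left _ (by omega)
    _ = 2 * (splitCount n + h * (n.choose h * 2 ^ ((h - 1) * m))) := by ring

lemma two_mul_sq_le_rpow_mul {n : ℕ} (hn : 6 ≤ n)
    (hgrowth : 18 * ((n - n / 2 : ℕ) : ℝ) ^ 2 ≤ (4 / 3) ^ (n - n / 2)) :
    2 * (n : ℝ) ^ 2 ≤ (2 / 3 : ℝ) ^ ((n : ℝ) / 3) * (2 ^ (n - n / 2) / 2 - (n / 2 : ℕ)) := by
  set h := n / 2
  set m := n - n / 2
  set ρ : ℝ := (2 / 3) ^ ((n : ℝ) / 3)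
  have hρ₁ : (2 / 3 : ℝ) ^ m ≤ ρ := by
    rw [← Real.rpow_natCast]
    refine Real.rpow_le_rpow_of_exponent_ge (by norm_num) (by norm_num) ?_
    rw [div_le_iff₀ (by norm_num)]
    exact_mod_cast (by omega : n ≤ m * 3)
  have hρ₂ : ρ ≤ 1 := Real.rpow_le_one (by norm_num) (by norm_num) (by positivity)
  have h43 : (2 / 3 : ℝ) ^ m * 2 ^ m = (4 / 3) ^ m := by rw [← mul_pow]; norm_num
  have hnm : (n : ℝ) ≤ 2 * m := by exact_mod_cast (by omega : n ≤ 2 * m)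
  have hhm : (h : ℝ) ≤ m := by exact_mod_cast (by omega : h ≤ m)
  have hm1 : (1 : ℝ) ≤ m := by exact_mod_cast (by omega : 1 ≤ m)
  calc 2 * (n : ℝ) ^ 2 ≤ 8 * (m : ℝ) ^ 2 := by
        nlinarith [mul_le_mul hnm hnm (Nat.cast_nonneg n) (by positivity)]
    _ ≤ (4 / 3 : ℝ) ^ m / 2 - m := by nlinarith
    _ ≤ (2 / 3) ^ m * 2 ^ m / 2 - ρ * h := by
        rw [h43]
        nlinarith [mul_le_mul_of_nonneg_right hρ₂ (by positivity : (0 : ℝ) ≤ h)]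
    _ ≤ ρ * 2 ^ m / 2 - ρ * h := by gcongr
    _ = ρ * (2 ^ m / 2 - h) := by ring

lemma splitBound_le_one_add_mul_splitCount {n : ℕ} (hn : 6 ≤ n)
    (hgrowth : 18 * ((n - n / 2 : ℕ) : ℝ) ^ 2 ≤ (4 / 3) ^ (n - n / 2)) :
    (splitBound n : ℝ) ≤ (1 + (2 / 3 : ℝ) ^ ((n : ℝ) / 3)) * splitCount n := by
  have hS := splitBound_le_splitCount_add_splitBoundError (by omega : 0 < n)
  have hE := splitBoundError_le n
  have hP := choose_half_mul_two_pow_le_splitCount hn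
  have key := two_mul_sq_le_rpow_mul hn hgrowth
  generalize n.choose (n / 2) * 2 ^ ((n / 2 - 1) * (n - n / 2)) = Y at hE hP
  set ρ : ℝ := (2 / 3) ^ ((n : ℝ) / 3)
  have hS : (splitBound n : ℝ) ≤ splitCount n + splitBoundError n := by exact_mod_cast hS
  have hE : (splitBoundError n : ℝ) ≤ 2 * n ^ 2 * Y := by exact_mod_cast hE
  have hP : (Y : ℝ) * 2 ^ (n - n / 2) ≤ 2 * (splitCount n + (n / 2 : ℕ) * Y) := by
    exact_mod_cast hP
  calc (splitBound n : ℝ) ≤ splitCount n + 2 * n ^ 2 * Y := by linarith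
    _ ≤ splitCount n + ρ * (Y * (2 ^ (n - n / 2) / 2 - (n / 2 : ℕ))) := by
        nlinarith [mul_le_mul_of_nonneg_right key (by positivity : (0 : ℝ) ≤ Y)]
    _ ≤ splitCount n + ρ * splitCount n := by gcongr; linarith
    _ = (1 + ρ) * splitCount n := by ring

lemma eventually_sq_le_four_thirds_pow : ∀ᶠ m : ℕ in atTop, 18 * (m : ℝ) ^ 2 ≤ (4 / 3) ^ m := by
  filter_upwards [(tendsto_pow_const_div_const_pow_of_one_lt 2
    (by norm_num : (1 : ℝ) < 4 / 3)).eventually (ge_mem_nhds (by norm_num : (0 : ℝ) < 1 / 18))]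
    with m hm
  rw [div_le_iff₀ (by positivity)] at hm
  linarith

end Asymptotics

/-- There exists `N` such that for all `n ≥ N`, letting `P n` be the number
of split graphs with vertex set `{1,…,n}` with empty questioning set, and
`S n = ∑_{c=2}^{⌊n/2⌋} C(n,c)·(2^c − 1)^{n−c} + ∑_{c=⌊n/2⌋+1}^{n−2} C(n,c)·(2^{n−c} − 1)^c`,
we have `P n ≤ S n ≤ (1 + (2/3)^{n/3}) · P n`. -/
theorem approx_count_split_empty_questioning :
    ∃ N : ℕ, ∀ n : ℕ, N ≤ n →
      ((Set.ncard {G : SimpleGraph (Fin n) | IsSplit G ∧ questioning G = ∅} : ℝ) ≤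
        ((∑ c ∈ Finset.Icc 2 (n / 2), Nat.choose n c * (2 ^ c - 1) ^ (n - c)
          + ∑ c ∈ Finset.Icc (n / 2 + 1) (n - 2),
              Nat.choose n c * (2 ^ (n - c) - 1) ^ c : ℕ) : ℝ)) ∧
      (((∑ c ∈ Finset.Icc 2 (n / 2), Nat.choose n c * (2 ^ c - 1) ^ (n - c)
          + ∑ c ∈ Finset.Icc (n / 2 + 1) (n - 2),
              Nat.choose n c * (2 ^ (n - c) - 1) ^ c : ℕ) : ℝ) ≤
        (1 + ((2 : ℝ) / 3) ^ ((n : ℝ) / 3)) *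
          (Set.ncard {G : SimpleGraph (Fin n) | IsSplit G ∧ questioning G = ∅} : ℝ)) := by
  obtain ⟨M, hM⟩ := Filter.eventually_atTop.1 eventually_sq_le_four_thirds_pow
  refine ⟨2 * M + 6, fun n hn => ⟨?_, ?_⟩⟩
  · exact_mod_cast splitCount_le_splitBound (n := n) (by omega)
  · exact splitBound_le_one_add_mul_splitCount (by omega) (hM _ (by omega))
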